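/- arXiv:2011.12452 — 2 statements merged into one kernel-verified Lean document; each statement's English description precedes it below -/
import Mathlib

section
/- Existence of the Weierstrass form of a 1-form (Lemma 4.1, existence part): Let n > 1 be an integer and let f = Σ_{i=0}^{n} a_i(X)·Y^{n−i} ∈ ℂ⟦X⟧[Y] be of degree n in Y with a_0(0) ≠ 0. Then for every pair R, S ∈ ℂ⟦X,Y⟧ there exist h, p ∈ ℂ⟦X,Y⟧ and A, B ∈ ℂ⟦X⟧[Y], with A = 0 or deg_Y A < n, and B = 0 or deg_Y B < n − 1, such that R = h·f_X + p·f + A and S = h·f_Y + B (equivalently, the 1-form W = R dX + S dY can be written as W = h df + p f dX + A dX + B dY). -/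
noncomputable section

/-- `ℂ⟦X,Y⟧`: formal power series in two variables over `ℂ`. -/
abbrev PS2 : Type := MvPowerSeries (Fin 2) ℂ

/-- Embedding of `ℂ⟦X⟧[Y]` into `ℂ⟦X,Y⟧`:
`P = Σ_j a_j(X) Y^j ↦ Σ_{i,j} (coeff of X^i in a_j) X^i Y^j`. -/
def toMv (P : Polynomial (PowerSeries ℂ)) : PS2 :=
  fun m => PowerSeries.coeff (m 0) (P.coeff (m 1))

/-- Partial derivative of a power series in `ℂ⟦X,Y⟧` with respect to variable `i`
(`pd 0` is `∂/∂X`, `pd 1` is `∂/∂Y`). -/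
def pd (i : Fin 2) (f : PS2) : PS2 :=
  fun m => ((m i + 1 : ℕ) : ℂ) * MvPowerSeries.coeff (m + Finsupp.single i 1) f

/-- `ord f`: the least total degree of a monomial occurring in `f`. -/
def tord (f : PS2) : ℕ :=
  sInf {d | ∃ m : Fin 2 →₀ ℕ, m 0 + m 1 = d ∧ MvPowerSeries.coeff m f ≠ 0}

/-- Intersection number `i₀(f,g) = dim_ℂ ℂ⟦X,Y⟧/(f,g)`. -/
def i0 (f g : PS2) : ℕ :=
  Module.finrank ℂ (PS2 ⧸ Ideal.span ({f, g} : Set PS2))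

/-!
Expanding in `Y`, identify `ℂ⟦X,Y⟧` with `ℂ⟦X⟧⟦Y⟧`. Over the complete local ring `ℂ⟦X⟧` a
polynomial in `Y` whose leading coefficient is a unit is a Weierstrass divisor, with remainders of
degree below its `Y`-degree. This applies to `f` and to `f_Y`, whose leading coefficient `n a₀` is
again a unit. Divide `S` by `f_Y` to get `S = h f_Y + B`, then `R - h f_X` by `f` to get
`R - h f_X = p f + A`.
-/

open Polynomial IsLocalRing

instance PowerSeries.charZero {R : Type*} [Semiring R] [CharZero R] : CharZero (PowerSeries R) :=
  charZero_of_injective_ringHom PowerSeries.C_injective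

instance PowerSeries.isAdicComplete_maximalIdeal {k : Type*} [Field k] :
    IsAdicComplete (maximalIdeal (PowerSeries k)) (PowerSeries k) :=
  PowerSeries.maximalIdeal_eq_span_X (k := k) ▸ inferInstance

theorem Polynomial.exists_eq_mul_add_degree_lt_of_isUnit_leadingCoeff {A : Type*} [CommRing A]
    [IsLocalRing A] [IsAdicComplete (maximalIdeal A) A] {g : A[X]} (hg : IsUnit g.leadingCoeff)
    (f : PowerSeries A) :
    ∃ (q : PowerSeries A) (r : A[X]), r.degree < g.natDegree ∧ f = g * q + r := by
  have hcoeff : PowerSeries.coeff g.natDegree ((g : PowerSeries A).map (residue A)) ≠ 0 := by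
    rw [PowerSeries.coeff_map, Polynomial.coeff_coe]
    exact (residue_ne_zero_iff_isUnit _).2 hg
  obtain ⟨q, r, hr, hf⟩ :=
    PowerSeries.exists_isWeierstrassDivision f fun h ↦ hcoeff (by rw [h, map_zero])
  refine ⟨q, r, hr.trans_le ?_, hf⟩
  exact_mod_cast ENat.toNat_le_of_le_natCast (PowerSeries.order_le _ hcoeff)

def optionUnitEquivFinTwo : Option Unit ≃ Fin 2 where
  toFun o := o.elim 1 fun _ ↦ 0
  invFun i := if i = 0 then some () else none
  left_inv := by rintro (_ | _) <;> rfl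
  right_inv := by intro i; fin_cases i <;> rfl

def seriesInYEquiv : PowerSeries (PowerSeries ℂ) ≃ₐ[ℂ] PS2 :=
  (MvPowerSeries.optionEquivLeft Unit ℂ).symm.trans
    (MvPowerSeries.renameEquiv ℂ optionUnitEquivFinTwo)

theorem coeff_seriesInYEquiv (F : PowerSeries (PowerSeries ℂ)) (m : Fin 2 →₀ ℕ) :
    MvPowerSeries.coeff m (seriesInYEquiv F) =
      PowerSeries.coeff (m 0) (PowerSeries.coeff (m 1) F) := by
  obtain ⟨F, rfl⟩ := (MvPowerSeries.optionEquivLeft Unit ℂ).surjective F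
  set x : Option Unit →₀ ℕ := Finsupp.optionElim (m 1) (Finsupp.single () (m 0))
  have hm : Finsupp.embDomain optionUnitEquivFinTwo.toEmbedding x = m := by
    ext i
    obtain ⟨o, rfl⟩ := optionUnitEquivFinTwo.surjective i
    rw [← Equiv.coe_toEmbedding, Finsupp.embDomain_apply_self]
    rcases o with _ | _ <;> simp [x] <;> rfl
  rw [PowerSeries.coeff, MvPowerSeries.coeff_coeff_optionEquivLeft]
  simp only [seriesInYEquiv, AlgEquiv.trans_apply, AlgEquiv.symm_apply_apply,
    MvPowerSeries.renameEquiv_apply]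
  conv_lhs => rw [← hm]
  exact MvPowerSeries.coeff_embDomain_rename _ _ _

theorem toMv_eq_seriesInYEquiv (P : (PowerSeries ℂ)[X]) : toMv P = seriesInYEquiv P := by
  ext m
  rw [coeff_seriesInYEquiv, Polynomial.coeff_coe]
  rfl

theorem exists_eq_mul_toMv_add_toMv {g : (PowerSeries ℂ)[X]}
    (hg : PowerSeries.constantCoeff g.leadingCoeff ≠ 0) (T : PS2) :
    ∃ (q : PS2) (r : (PowerSeries ℂ)[X]),
      (r = 0 ∨ r.natDegree < g.natDegree) ∧ T = q * toMv g + toMv r := by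
  obtain ⟨q, r, hr, hT⟩ := exists_eq_mul_add_degree_lt_of_isUnit_leadingCoeff
    (PowerSeries.isUnit_iff_constantCoeff.2 hg.isUnit) (seriesInYEquiv.symm T)
  refine ⟨seriesInYEquiv q, r,
    or_iff_not_imp_left.2 fun hr0 ↦ (natDegree_lt_iff_degree_lt hr0).2 hr, ?_⟩
  rw [toMv_eq_seriesInYEquiv, toMv_eq_seriesInYEquiv, mul_comm, ← map_mul, ← map_add, ← hT,
    AlgEquiv.apply_symm_apply]

theorem pd_one_toMv (P : (PowerSeries ℂ)[X]) : pd 1 (toMv P) = toMv (derivative P) := by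
  ext m
  simp only [pd, toMv, MvPowerSeries.coeff_apply, Polynomial.coeff_derivative, Finsupp.add_apply]
  rw [← Nat.cast_succ, ← map_natCast PowerSeries.C, PowerSeries.coeff_mul_C, mul_comm]
  simp

/-- Existence of the Weierstrass form of a 1-form (Lemma 4.1, existence part). -/
theorem weierstrass_form_existence
    (n : ℕ) (hn : 1 < n) (f : Polynomial (PowerSeries ℂ))
    (hdeg : f.natDegree = n)
    (ha0 : PowerSeries.constantCoeff f.leadingCoeff ≠ 0)
    (R S : PS2) :
    ∃ (h p : PS2) (A B : Polynomial (PowerSeries ℂ)),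
      (A = 0 ∨ A.natDegree < n) ∧ (B = 0 ∨ B.natDegree < n - 1) ∧
      R = h * pd 0 (toMv f) + p * toMv f + toMv A ∧
      S = h * pd 1 (toMv f) + toMv B := by
  have hf' : PowerSeries.constantCoeff (derivative f).leadingCoeff ≠ 0 := by
    rw [leadingCoeff_derivative, map_mul, map_natCast, hdeg]
    exact mul_ne_zero ha0 (Nat.cast_ne_zero.2 (by omega))
  obtain ⟨h, B, hB, hS⟩ := exists_eq_mul_toMv_add_toMv hf' S
  obtain ⟨p, A, hA, hR⟩ := exists_eq_mul_toMv_add_toMv ha0 (R - h * pd 0 (toMv f))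
  rw [natDegree_derivative, hdeg] at hB
  rw [hdeg] at hA
  exact ⟨h, p, A, B, hA, hB, by linear_combination hR, by rw [pd_one_toMv]; exact hS⟩
end
end

section
/- Multiplicity bound for 1-forms in Weierstrass form (inequality (7) in the proof of Proposition 4.3): Let n ≥ 2 and let f = Σ_{i=0}^{n} a_i(X)·Y^{n−i} ∈ ℂ⟦X⟧[Y] with a_0(0) ≠ 0 and ord(f) = deg_Y(f) = n. If h ∈ ℂ⟦X,Y⟧ is a unit (h(0,0) ≠ 0) and B ∈ ℂ⟦X⟧[Y] satisfies B = 0 or deg_Y B < n − 1, then ord(h·f_Y + B) ≤ n − 1. In particular, for any p ∈ ℂ⟦X,Y⟧ and A ∈ ℂ⟦X⟧[Y] with A = 0 or deg_Y A < n, the 1-form W = h df + p f dX + A dX + B dY has multiplicity mult(W) = min(ord(h·f_X + p·f + A), ord(h·f_Y + B)) ≤ n − 1. -/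
/-! The monomial `Y^(n-1)` has coefficient `h(0,0) · n · a₀(0) ≠ 0` in `h·f_Y + B`: `B` has no
`Y^(n-1)` term, and since `f_Y` has order at least `n - 1`, only the constant term of `h`
contributes to the coefficients of degree `n - 1` of `h·f_Y`. -/

noncomputable section

open MvPowerSeries Finsupp

theorem MvPowerSeries.coeff_mul_eq_constantCoeff_mul_of_degree_le_order {σ R : Type*}
    [CommSemiring R] (f : MvPowerSeries σ R) {g : MvPowerSeries σ R} {d : σ →₀ ℕ}
    (hd : (d.degree : ℕ∞) ≤ g.order) :
    coeff d (f * g) = constantCoeff f * coeff d g := by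
  classical
  rw [coeff_mul, Finset.sum_eq_single (0, d), coeff_zero_eq_constantCoeff_apply]
  · rintro ⟨a, b⟩ hab hne
    rw [Finset.HasAntidiagonal.mem_antidiagonal] at hab
    have ha : a ≠ 0 := fun ha => hne (by simp_all)
    have hb : b.degree < d.degree := by
      rwa [← hab, map_add, lt_add_iff_pos_left, pos_iff_ne_zero, Ne, degree_eq_zero_iff]
    rw [coeff_of_lt_order (lt_of_lt_of_le (by exact_mod_cast hb) hd), mul_zero]
  · simp

lemma degree_eq_add_fin_two (d : Fin 2 →₀ ℕ) : d.degree = d 0 + d 1 := by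
  simp [degree_eq_sum, Fin.sum_univ_two]

lemma tord_le_degree {f : PS2} {d : Fin 2 →₀ ℕ} (h : coeff d f ≠ 0) : tord f ≤ d.degree :=
  Nat.sInf_le ⟨d, (degree_eq_add_fin_two d).symm, h⟩

lemma coe_tord_le_order (f : PS2) : (tord f : ℕ∞) ≤ f.order :=
  le_order fun d hd => by
    by_contra h
    exact hd.not_ge (by exact_mod_cast tord_le_degree h)

lemma coeff_pd (i : Fin 2) (g : PS2) (d : Fin 2 →₀ ℕ) :
    coeff d (pd i g) = ((d i + 1 : ℕ) : ℂ) * coeff (d + single i 1) g := rfl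

lemma coe_le_order_pd {g : PS2} {k : ℕ} (hg : ((k + 1 : ℕ) : ℕ∞) ≤ g.order) (i : Fin 2) :
    (k : ℕ∞) ≤ (pd i g).order :=
  nat_le_order fun d hd => by
    have hlt : ((d + single i 1).degree : ℕ∞) < g.order := by
      refine lt_of_lt_of_le ?_ hg
      rw [map_add, degree_single]
      exact_mod_cast Nat.succ_lt_succ hd
    rw [coeff_pd, coeff_of_lt_order hlt, mul_zero]

lemma coeff_single_toMv (P : Polynomial (PowerSeries ℂ)) (k : ℕ) :
    coeff (single 1 k) (toMv P) = PowerSeries.constantCoeff (P.coeff k) := by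
  show PowerSeries.coeff (single 1 k 0) (P.coeff (single 1 k 1)) = _
  simp

lemma coeff_single_pd_one_toMv (P : Polynomial (PowerSeries ℂ)) (k : ℕ) :
    coeff (single 1 k) (pd 1 (toMv P)) =
      ((k + 1 : ℕ) : ℂ) * PowerSeries.constantCoeff (P.coeff (k + 1)) := by
  rw [coeff_pd, ← single_add, coeff_single_toMv, single_eq_same]

/-- Multiplicity bound for 1-forms in Weierstrass form (inequality (7) in the proof of
Proposition 4.3): `ord(h·f_Y + B) ≤ n - 1`, and in particular the multiplicity of
`W = h df + p f dX + A dX + B dY` is at most `n - 1`. -/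
theorem mult_weierstrass_form_le
    (n : ℕ) (hn : 2 ≤ n) (f : Polynomial (PowerSeries ℂ))
    (hdeg : f.natDegree = n)
    (ha0 : PowerSeries.constantCoeff f.leadingCoeff ≠ 0)
    (hord : tord (toMv f) = n)
    (h : PS2) (hu : MvPowerSeries.constantCoeff h ≠ 0)
    (B : Polynomial (PowerSeries ℂ)) (hB : B = 0 ∨ B.natDegree < n - 1) :
    tord (h * pd 1 (toMv f) + toMv B) ≤ n - 1 ∧
    ∀ (p : PS2) (A : Polynomial (PowerSeries ℂ)), (A = 0 ∨ A.natDegree < n) →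
      min (tord (h * pd 0 (toMv f) + p * toMv f + toMv A))
          (tord (h * pd 1 (toMv f) + toMv B)) ≤ n - 1 := by
  have hn1 : n - 1 + 1 = n := by omega
  have hfY : ((n - 1 : ℕ) : ℕ∞) ≤ (pd 1 (toMv f)).order :=
    coe_le_order_pd (by rw [hn1, ← hord]; exact coe_tord_le_order _) 1
  have hB0 : B.coeff (n - 1) = 0 :=
    hB.elim (fun hB => by simp [hB]) Polynomial.coeff_eq_zero_of_natDegree_lt
  have hcoeff : coeff (single 1 (n - 1)) (h * pd 1 (toMv f) + toMv B) =
      constantCoeff h * (n * PowerSeries.constantCoeff f.leadingCoeff) := by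
    rw [map_add, coeff_mul_eq_constantCoeff_mul_of_degree_le_order h (by rwa [degree_single]),
      coeff_single_pd_one_toMv, coeff_single_toMv, hB0, hn1, ← hdeg, Polynomial.coeff_natDegree,
      map_zero, add_zero]
  have hmain : tord (h * pd 1 (toMv f) + toMv B) ≤ n - 1 := by
    have hn0 : (n : ℂ) ≠ 0 := Nat.cast_ne_zero.mpr (by omega)
    have hne := mul_ne_zero hu (mul_ne_zero hn0 ha0)
    exact (tord_le_degree (hcoeff ▸ hne)).trans_eq (degree_single _ _)
  exact ⟨hmain, fun _ _ _ => (min_le_right _ _).trans hmain⟩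
end
end
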